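/- arXiv:1510.06353 — 4 statements merged into one kernel-verified Lean document; each statement's English description precedes it below -/
import Mathlib

section
/- Let Ω ⊂ ℝⁿ be a bounded domain with smooth boundary, V : Ω → ℝ continuous with V ≥ 0, and let φ satisfy (-Δ + V)φ = λφ in Ω with Dirichlet boundary conditions, λ > 0. Let u solve (-Δ + V)u = 1 in Ω with Dirichlet boundary conditions. Then for all x ∈ Ω, |φ(x)| ≤ λ u(x) ‖φ‖_{L^∞(Ω)}. -/
open MeasureTheory Filter

/-- The Laplacian of `f : ℝⁿ → ℝ`, as the trace of the second derivative. -/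
noncomputable def laplacian {n : ℕ} (f : EuclideanSpace ℝ (Fin n) → ℝ)
    (x : EuclideanSpace ℝ (Fin n)) : ℝ :=
  ∑ i : Fin n, iteratedFDeriv ℝ 2 f x ![EuclideanSpace.single i 1, EuclideanSpace.single i 1]

lemma sdt {g g' : ℝ → ℝ} {c : ℝ} (hg : ∀ᶠ t in nhds (0:ℝ), HasDerivAt g (g' t) t)
    (hg' : HasDerivAt g' c 0) (hmax : IsLocalMax g 0) : c ≤ 0 := by
  by_contra hc
  push_neg at hc
  have h0 : g' 0 = 0 := by
    rw [hg.self_of_nhds.deriv.symm.trans hmax.deriv_eq_zero]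
  have hslope : Tendsto (slope g' 0) (nhdsWithin 0 {(0:ℝ)}ᶜ) (nhds c) :=
    hasDerivAt_iff_tendsto_slope.mp hg'
  have hpos : ∀ᶠ t in nhdsWithin (0:ℝ) {(0:ℝ)}ᶜ, 0 < slope g' 0 t :=
    hslope.eventually (eventually_gt_nhds hc)
  rw [eventually_nhdsWithin_iff] at hpos
  obtain ⟨δ1, hδ1, hball1⟩ := Metric.eventually_nhds_iff.mp hpos
  obtain ⟨δ2, hδ2, hball2⟩ := Metric.eventually_nhds_iff.mp hg
  obtain ⟨δ3, hδ3, hball3⟩ := Metric.eventually_nhds_iff.mp (hmax : ∀ᶠ t in nhds 0, g t ≤ g 0)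
  set δ : ℝ := min δ1 (min δ2 δ3) with hδdef
  have hδ : 0 < δ := lt_min hδ1 (lt_min hδ2 hδ3)
  have habs : ∀ t : ℝ, 0 ≤ t → t < δ → dist t 0 < δ := by
    intro t ht htδ; rw [Real.dist_eq, sub_zero, abs_of_nonneg ht]; exact htδ
  have hg'pos : ∀ t : ℝ, 0 < t → t < δ → 0 < g' t := by
    intro t ht htδ
    have hd : dist t 0 < δ1 := lt_of_lt_of_le (habs t ht.le htδ) (min_le_left _ _)
    have h2 := hball1 hd (by simp [ht.ne'])
    rw [slope_def_field] at h2
    have : 0 < (g' t - g' 0) / (t - 0) := h2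
    rw [h0, sub_zero, sub_zero] at this
    exact (div_pos_iff.mp this).resolve_right (fun h => absurd ht (not_lt.mpr h.2.le)) |>.1
  -- g strictly mono on [0, δ/2]
  have hmono : StrictMonoOn g (Set.Icc 0 (δ/2)) := by
    apply strictMonoOn_of_deriv_pos (convex_Icc _ _)
    · intro t ht
      have : dist t 0 < δ2 := lt_of_lt_of_le (habs t ht.1 (lt_of_le_of_lt ht.2 (by linarith)))
        (le_trans (min_le_right _ _) (min_le_left _ _))
      exact ((hball2 this).differentiableAt).continuousAt.continuousWithinAt
    · intro t ht
      rw [interior_Icc] at ht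
      have hd2 : dist t 0 < δ2 := lt_of_lt_of_le (habs t ht.1.le (lt_trans ht.2 (by linarith)))
        (le_trans (min_le_right _ _) (min_le_left _ _))
      rw [(hball2 hd2).deriv]
      exact hg'pos t ht.1 (by linarith [ht.2])
  have hlt : g 0 < g (δ/2) := hmono (by constructor <;> linarith) (by constructor <;> linarith) (by linarith)
  have : g (δ/2) ≤ g 0 := hball3 (lt_of_lt_of_le (habs _ (by linarith) (by linarith))
    (le_trans (min_le_right _ _) (min_le_right _ _)))
  linarith

variable {n : ℕ}
local notation "E" => EuclideanSpace ℝ (Fin n)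

lemma line_hasDerivAt (y v : E) (t : ℝ) : HasDerivAt (fun t : ℝ => y + t • v) v t := by
  simpa using ((hasDerivAt_id t).smul_const v).const_add y

lemma dir_le {f : E → ℝ} {y v : E} (hf : ContDiffAt ℝ 2 f y)
    (hmax : IsLocalMax f y) : fderiv ℝ (fderiv ℝ f) y v v ≤ 0 := by
  set L : ℝ → E := fun t => y + t • v with hL
  have hL0 : L 0 = y := by simp [hL]
  have hLc : Continuous L := by continuity
  have hLt : Tendsto L (nhds 0) (nhds y) := by
    rw [← hL0]; exact hLc.tendsto 0
  set g : ℝ → ℝ := fun t => f (L t) with hgdef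
  set g' : ℝ → ℝ := fun t => fderiv ℝ f (L t) v with hg'def
  have hev : ∀ᶠ t in nhds (0:ℝ), HasDerivAt g (g' t) t := by
    have : ∀ᶠ z in nhds y, DifferentiableAt ℝ f z :=
      (hf.eventually (by norm_num)).mono fun z hz => hz.differentiableAt (by norm_num)
    filter_upwards [hLt.eventually this] with t ht
    exact ht.hasFDerivAt.comp_hasDerivAt t (line_hasDerivAt y v t)
  have hdF : DifferentiableAt ℝ (fderiv ℝ f) y := by
    have : ContDiffAt ℝ 1 (fderiv ℝ f) y := hf.fderiv_right (le_refl _)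
    exact this.differentiableAt (by norm_num)
  have hg' : HasDerivAt g' (fderiv ℝ (fderiv ℝ f) y v v) 0 := by
    have h1 : HasFDerivAt (fun z => fderiv ℝ f z v)
        ((ContinuousLinearMap.apply ℝ ℝ v).comp (fderiv ℝ (fderiv ℝ f) y)) (L 0) := by
      rw [hL0]
      exact (ContinuousLinearMap.apply ℝ ℝ v).hasFDerivAt.comp y hdF.hasFDerivAt
    have h2 := h1.comp_hasDerivAt 0 (line_hasDerivAt y v 0)
    exact h2
  have hmaxg : IsLocalMax g 0 := by
    have h3 : ∀ᶠ t in nhds (0:ℝ), f (L t) ≤ f y := hLt.eventually hmax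
    have : g 0 = f y := by rw [hgdef]; simp [hL0]
    unfold IsLocalMax IsMaxFilter
    rw [this]; exact h3
  exact sdt hev hg' hmaxg

lemma lap_combo {w h : E → ℝ} {x : E} (hw : ContDiffAt ℝ 2 w x) (hh : ContDiffAt ℝ 2 h x)
    (a b : ℝ) :
    laplacian (fun z => a * w z + b * h z) x = a * laplacian w x + b * laplacian h x := by
  obtain ⟨u, huo, hxu, hwu⟩ := hw.contDiffOn' le_rfl (by norm_num)
  obtain ⟨v, hvo, hxv, hhv⟩ := hh.contDiffOn' le_rfl (by norm_num)
  rw [Set.insert_eq_of_mem (Set.mem_univ x), Set.univ_inter] at hwu hhv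
  set s := u ∩ v with hs
  have hso : IsOpen s := huo.inter hvo
  have hxs : x ∈ s := ⟨hxu, hxv⟩
  have hu : UniqueDiffOn ℝ s := hso.uniqueDiffOn
  have hws : ContDiffOn ℝ 2 (a • w) s := (hwu.mono Set.inter_subset_left).const_smul a
  have hhs : ContDiffOn ℝ 2 (b • h) s := (hhv.mono Set.inter_subset_right).const_smul b
  have key : ∀ m : Fin 2 → E, iteratedFDeriv ℝ 2 (fun z => a * w z + b * h z) x m
      = a * iteratedFDeriv ℝ 2 w x m + b * iteratedFDeriv ℝ 2 h x m := by
    intro m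
    have hfun : (fun z => a * w z + b * h z) = (a • w) + (b • h) := by
      funext z; simp [smul_eq_mul]
    rw [hfun, ← iteratedFDerivWithin_of_isOpen 2 hso hxs,
      iteratedFDerivWithin_add_apply (hws x hxs) (hhs x hxs) hu hxs,
      iteratedFDerivWithin_const_smul_apply ((hwu.mono Set.inter_subset_left) x hxs) hu hxs,
      iteratedFDerivWithin_const_smul_apply ((hhv.mono Set.inter_subset_right) x hxs) hu hxs,
      iteratedFDerivWithin_of_isOpen 2 hso hxs, iteratedFDerivWithin_of_isOpen 2 hso hxs]
    simp [smul_eq_mul]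
  unfold laplacian
  simp only [key]
  rw [Finset.sum_add_distrib, Finset.mul_sum, Finset.mul_sum]

lemma lap_nonpos_of_localMax {f : E → ℝ} {y : E} (hf : ContDiffAt ℝ 2 f y)
    (hmax : IsLocalMax f y) : laplacian f y ≤ 0 := by
  apply Finset.sum_nonpos
  intro i _
  rw [iteratedFDeriv_two_apply]
  simpa using dir_le (v := EuclideanSpace.single i 1) hf hmax

lemma exp_contDiff (a : ℝ) (i : Fin n) :
    ContDiff ℝ 2 (fun x : E => Real.exp (a * x i)) :=
  Real.contDiff_exp.of_le le_top |>.comp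
    ((contDiff_const.mul ((EuclideanSpace.proj (𝕜 := ℝ) i).contDiff.of_le le_top)))

lemma exp_fderiv (a : ℝ) (i : Fin n) (x : E) :
    fderiv ℝ (fun z : E => Real.exp (a * z i)) x
      = (a * Real.exp (a * x i)) • (EuclideanSpace.proj (𝕜 := ℝ) i : E →L[ℝ] ℝ) := by
  set L : E →L[ℝ] ℝ := EuclideanSpace.proj (𝕜 := ℝ) i with hL
  have h1 : HasFDerivAt (fun z : E => a * z i) (a • L) x := by
    exact (L.hasFDerivAt.const_smul a (x := x))
  have h2 := (Real.hasDerivAt_exp (a * x i)).comp_hasFDerivAt x h1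
  have h3 : HasFDerivAt (fun z : E => Real.exp (a * z i)) (Real.exp (a * x i) • a • L) x := h2
  rw [h3.fderiv, smul_smul, mul_comm]

lemma lap_exp (a : ℝ) (i : Fin n) (x : E) :
    laplacian (fun z : E => Real.exp (a * z i)) x = a ^ 2 * Real.exp (a * x i) := by
  set L : E →L[ℝ] ℝ := EuclideanSpace.proj (𝕜 := ℝ) i with hL
  have hF : HasFDerivAt (fderiv ℝ (fun z : E => Real.exp (a * z i)))
      (((a ^ 2 * Real.exp (a * x i)) • L).smulRight L) x := by
    have hc : HasFDerivAt (fun z : E => a * Real.exp (a * z i))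
        ((a ^ 2 * Real.exp (a * x i)) • L) x := by
      have h1 : HasFDerivAt (fun z : E => a * z i) (a • L) x := by
        exact (L.hasFDerivAt.const_smul a (x := x))
      have h2 := ((Real.hasDerivAt_exp (a * x i)).comp_hasFDerivAt x h1).const_smul a
      have h3 : HasFDerivAt (fun z : E => a * Real.exp (a * z i))
          (a • Real.exp (a * x i) • a • L) x := h2
      convert h3 using 1
      rw [smul_smul, smul_smul]
      congr 1
      ring
    have := hc.smul_const (L : E →L[ℝ] ℝ)
    apply this.congr_of_eventuallyEq
    filter_upwards with z
    rw [exp_fderiv]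
  unfold laplacian
  have key : ∀ j : Fin n, iteratedFDeriv ℝ 2 (fun z : E => Real.exp (a * z i)) x
      ![EuclideanSpace.single j 1, EuclideanSpace.single j 1]
      = if i = j then a ^ 2 * Real.exp (a * x i) else 0 := by
    intro j
    rw [iteratedFDeriv_two_apply, hF.fderiv]
    simp only [Matrix.cons_val_zero, Matrix.cons_val_one, Matrix.head_cons,
      ContinuousLinearMap.smulRight_apply, ContinuousLinearMap.smul_apply, smul_eq_mul, hL]
    have : L (EuclideanSpace.single j 1) = if i = j then 1 else 0 := by
      simp [hL, EuclideanSpace.single_apply]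
    rw [this]
    by_cases h : i = j <;> simp [h]
  simp only [key]
  rw [Finset.sum_ite_eq Finset.univ i (fun _ => a ^ 2 * Real.exp (a * x i))]
  simp

lemma wmp (hn : 0 < n) (Ω : Set E) (hΩo : IsOpen Ω) (hΩb : Bornology.IsBounded Ω)
    (V w : E → ℝ) (hV : ContinuousOn V (closure Ω)) (hVnn : ∀ x ∈ closure Ω, 0 ≤ V x)
    (hwc : ContinuousOn w (closure Ω)) (hw2 : ∀ x ∈ Ω, ContDiffAt ℝ 2 w x)
    (hwbd : ∀ x ∈ frontier Ω, 0 ≤ w x)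
    (hweq : ∀ x ∈ Ω, 0 ≤ -laplacian w x + V x * w x) :
    ∀ x ∈ Ω, 0 ≤ w x := by
  by_contra hcon
  push_neg at hcon
  obtain ⟨x₀, hx₀Ω, hx₀⟩ := hcon
  set K := closure Ω with hK
  have hKc : IsCompact K := hΩb.isCompact_closure
  have hx₀K : x₀ ∈ K := subset_closure hx₀Ω
  have hKne : K.Nonempty := ⟨x₀, hx₀K⟩
  set i0 : Fin n := ⟨0, hn⟩
  set C := sSup (V '' K) with hC
  have hCub : ∀ x ∈ K, V x ≤ C :=
    fun x hx => le_csSup (hKc.bddAbove_image hV) (Set.mem_image_of_mem _ hx)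
  have hC0 : 0 ≤ C := le_trans (hVnn x₀ hx₀K) (hCub x₀ hx₀K)
  set β := C + 1 with hβdef
  have hβ : 0 < β := by linarith
  set α := Real.sqrt β with hα
  have hα2 : α ^ 2 = β := Real.sq_sqrt hβ.le
  set h : E → ℝ := fun x => Real.exp (α * x i0) with hhdef
  have hh : ContDiff ℝ 2 h := exp_contDiff α i0
  have hhpos : ∀ x, 0 < h x := fun x => Real.exp_pos _
  have hlaph : ∀ x, laplacian h x = β * h x := by
    intro x; rw [hhdef]; rw [lap_exp α i0 x, hα2]
  set H := sSup (h '' K) with hHdef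
  have hHub : ∀ x ∈ K, h x ≤ H :=
    fun x hx => le_csSup (hKc.bddAbove_image hh.continuous.continuousOn)
      (Set.mem_image_of_mem _ hx)
  have hHpos : 0 < H := lt_of_lt_of_le (hhpos x₀) (hHub x₀ hx₀K)
  set ε := (-w x₀) / (2 * H) with hεdef
  have hε : 0 < ε := div_pos (by linarith) (by linarith)
  have hεH : ε * (2 * H) = -w x₀ := div_mul_cancel₀ _ (by linarith)
  set f : E → ℝ := fun z => (-1) * w z + ε * h z with hfdef
  have hfc : ContinuousOn f K :=
    ((continuousOn_const.mul hwc).add (continuousOn_const.mul hh.continuous.continuousOn))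
  obtain ⟨y, hyK, hymax⟩ := hKc.exists_isMaxOn hKne hfc
  have hfx₀ : ε * H < f x₀ := by
    have : f x₀ = (-1) * w x₀ + ε * h x₀ := rfl
    nlinarith [hhpos x₀, hε, hHpos]
  have hfy : ε * H < f y := lt_of_lt_of_le hfx₀ (hymax hx₀K)
  have hyΩ : y ∈ Ω := by
    have hyn : y ∉ frontier Ω := by
      intro hyf
      have h1 : f y ≤ ε * H := by
        have h2 : 0 ≤ w y := hwbd y hyf
        have h3 : h y ≤ H := hHub y (frontier_subset_closure hyf)
        have : f y = (-1) * w y + ε * h y := rfl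
        nlinarith
      linarith
    have hyK' : y ∈ Ω ∪ frontier Ω := by
      rw [← closure_eq_self_union_frontier]; exact hyK
    rcases hyK' with h | h
    · exact h
    · exact absurd h hyn
  have hKnhds : K ∈ nhds y := Filter.mem_of_superset (hΩo.mem_nhds hyΩ) subset_closure
  have hlocmax : IsLocalMax f y := hymax.isLocalMax hKnhds
  have hf2 : ContDiffAt ℝ 2 f y :=
    (contDiffAt_const.mul (hw2 y hyΩ)).add (contDiffAt_const.mul hh.contDiffAt)
  have hlapf : laplacian f y = (-1) * laplacian w y + ε * laplacian h y :=
    lap_combo (hw2 y hyΩ) hh.contDiffAt (-1) ε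
  have hlapf0 : laplacian f y ≤ 0 := lap_nonpos_of_localMax hf2 hlocmax
  have hfypos : 0 < f y := lt_trans (by positivity) hfy
  have hVy : 0 ≤ V y := hVnn y (subset_closure hyΩ)
  have hVyC : V y ≤ C := hCub y (subset_closure hyΩ)
  have heq := hweq y hyΩ
  have hfyval : f y = (-1) * w y + ε * h y := rfl
  rw [hlaph y] at hlapf
  -- derive contradiction
  have hwy : w y < ε * h y := by nlinarith
  have h1 : V y * w y ≥ ε * (β * h y) := by nlinarith
  nlinarith [mul_le_mul_of_nonneg_left hwy.le hVy, mul_pos hε (hhpos y),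
    mul_pos (mul_pos hε hβ) (hhpos y)]


/-- **Filoche–Mayboroda landscape inequality.** If `(-Δ + V) φ = λ φ` on a bounded open
`Ω` with Dirichlet boundary conditions, `V ≥ 0`, `λ > 0`, and `u` is the landscape
function solving `(-Δ + V) u = 1` with Dirichlet boundary conditions, then
`|φ(x)| ≤ λ u(x) ‖φ‖_{L^∞(Ω)}` for all `x ∈ Ω`. -/
theorem landscape_inequality {n : ℕ} (Ω : Set (EuclideanSpace ℝ (Fin n)))
    (hΩo : IsOpen Ω) (hΩb : Bornology.IsBounded Ω) (hΩne : Ω.Nonempty)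
    (V φ u : EuclideanSpace ℝ (Fin n) → ℝ) (lam : ℝ) (hlam : 0 < lam)
    (hV : ContinuousOn V (closure Ω)) (hVnonneg : ∀ x ∈ closure Ω, 0 ≤ V x)
    (hφc : ContinuousOn φ (closure Ω)) (hφ2 : ∀ x ∈ Ω, ContDiffAt ℝ 2 φ x)
    (hφbd : ∀ x ∈ frontier Ω, φ x = 0)
    (hφeq : ∀ x ∈ Ω, -laplacian φ x + V x * φ x = lam * φ x)
    (huc : ContinuousOn u (closure Ω)) (hu2 : ∀ x ∈ Ω, ContDiffAt ℝ 2 u x)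
    (hubd : ∀ x ∈ frontier Ω, u x = 0)
    (hueq : ∀ x ∈ Ω, -laplacian u x + V x * u x = 1) :
    ∀ x ∈ Ω, |φ x| ≤ lam * u x * sSup ((fun y => |φ y|) '' closure Ω) := by
  intro x hxΩ
  have hxK : x ∈ closure Ω := subset_closure hxΩ
  rcases Nat.eq_zero_or_pos n with h0 | hn
  · -- degenerate zero-dimensional case
    subst h0
    haveI : Subsingleton (EuclideanSpace ℝ (Fin 0)) :=
      ⟨fun a b => PiLp.ext fun i => Fin.elim0 i⟩
    have hlap : laplacian φ x = 0 := by
      unfold laplacian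
      simp
    have hlapu : laplacian u x = 0 := by
      unfold laplacian
      simp
    have h1 : V x * φ x = lam * φ x := by have := hφeq x hxΩ; rw [hlap] at this; linarith
    have h2 : V x * u x = 1 := by have := hueq x hxΩ; rw [hlapu] at this; linarith
    have himg : ((fun y => |φ y|) '' closure Ω) = {|φ x|} := by
      ext a
      constructor
      · rintro ⟨z, _, rfl⟩; rw [Subsingleton.elim z x]; rfl
      · rintro rfl; exact ⟨x, hxK, rfl⟩
    rw [himg, csSup_singleton]
    by_cases hφx : φ x = 0
    · simp [hφx]
    · have hVlam : V x = lam := mul_right_cancel₀ hφx h1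
      have : lam * u x = 1 := by rw [← hVlam]; exact h2
      rw [this, one_mul]
  · -- main case via the weak maximum principle
    set M := sSup ((fun y => |φ y|) '' closure Ω) with hM
    have hKc : IsCompact (closure Ω) := hΩb.isCompact_closure
    have hMub : ∀ z ∈ closure Ω, |φ z| ≤ M :=
      fun z hz => le_csSup (hKc.bddAbove_image hφc.abs) (Set.mem_image_of_mem _ hz)
    have hM0 : 0 ≤ M := le_trans (abs_nonneg _) (hMub x hxK)
    have main : ∀ s : ℝ, s = 1 ∨ s = -1 → ∀ z ∈ Ω, 0 ≤ (lam * M) * u z + (-s) * φ z := by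
      intro s hs
      apply wmp hn Ω hΩo hΩb V _ hV hVnonneg
      · exact (continuousOn_const.mul huc).add (continuousOn_const.mul hφc)
      · intro z hz
        exact (contDiffAt_const.mul (hu2 z hz)).add (contDiffAt_const.mul (hφ2 z hz))
      · intro z hz
        rw [hφbd z hz, hubd z hz]; ring_nf; exact le_refl 0
      · intro z hz
        have hlapc : laplacian (fun y => (lam * M) * u y + (-s) * φ y) z
            = (lam * M) * laplacian u z + (-s) * laplacian φ z :=
          lap_combo (hu2 z hz) (hφ2 z hz) (lam * M) (-s)
        have h1 := hueq z hz
        have h2 := hφeq z hz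
        have h3 : |φ z| ≤ M := hMub z (subset_closure hz)
        have habs : -M ≤ φ z ∧ φ z ≤ M := abs_le.mp h3
        rw [hlapc]
        rcases hs with rfl | rfl
        · have key : -((lam * M) * laplacian u z + (-(1:ℝ)) * laplacian φ z)
              + V z * ((lam * M) * u z + (-(1:ℝ)) * φ z) = lam * M - lam * φ z := by
            linear_combination (lam * M) * h1 - h2
          rw [key]
          nlinarith [habs.2]
        · have key : -((lam * M) * laplacian u z + (-(-1:ℝ)) * laplacian φ z)
              + V z * ((lam * M) * u z + (-(-1:ℝ)) * φ z) = lam * M + lam * φ z := by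
            linear_combination (lam * M) * h1 + h2
          rw [key]
          nlinarith [habs.1]
    have hp := main 1 (Or.inl rfl) x hxΩ
    have hm := main (-1) (Or.inr rfl) x hxΩ
    rw [abs_le]
    constructor <;> nlinarith
end

section
/- With the same setup as the landscape inequality, for every natural number k ≥ 1, |φ(x)| ≤ λ^k u_k(x) ‖φ‖_{L^∞(Ω)} for all x ∈ Ω, where u_k = (-Δ + V)^{-k} 1, i.e., u_1 = u and u_{j+1} solves (-Δ + V)u_{j+1} = u_j with Dirichlet boundary conditions. -/
open MeasureTheory

open Filter Topology Set

/-- At a local minimum of a `C²` function of one real variable, the second derivative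
is nonnegative. -/
lemma aux_deriv2_nonneg {f : ℝ → ℝ} {a : ℝ} (hf : ContDiffAt ℝ 2 f a)
    (hmin : IsLocalMin f a) : 0 ≤ deriv (deriv f) a := by
  by_contra hcon
  push_neg at hcon
  have hev : ∀ᶠ y in 𝓝 a, ContDiffAt ℝ 2 f y := hf.eventually (by norm_num)
  have hfd : DifferentiableAt ℝ (fderiv ℝ f) a :=
    (hf.fderiv_right (m := 1) (by norm_num)).differentiableAt one_ne_zero
  have hderiv_eq : (deriv f) = fun y => fderiv ℝ f y 1 := by
    funext y; rw [fderiv_apply_one_eq_deriv]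
  have hgd : DifferentiableAt ℝ (deriv f) a := by
    rw [hderiv_eq]
    exact hfd.clm_apply (differentiableAt_const _)
  have hg : HasDerivAt (deriv f) (deriv (deriv f) a) a := hgd.hasDerivAt
  have hda : deriv f a = 0 := hmin.deriv_eq_zero
  -- slope of `deriv f` is eventually negative on the right
  have hslope : Tendsto (slope (deriv f) a) (𝓝[≠] a) (𝓝 (deriv (deriv f) a)) :=
    hasDerivAt_iff_tendsto_slope.mp hg
  have hsl : ∀ᶠ t in 𝓝[>] a, slope (deriv f) a t < 0 :=
    (hslope.eventually_lt_const hcon).filter_mono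
      (nhdsWithin_mono a fun x hx => ne_of_gt hx)
  have hneg : ∀ᶠ t in 𝓝[>] a, deriv f t < 0 := by
    filter_upwards [hsl, self_mem_nhdsWithin] with t ht ht'
    rw [slope_def_field, hda, sub_zero] at ht
    rcases div_neg_iff.mp ht with ⟨_, h2⟩ | ⟨h1, _⟩
    · linarith [mem_Ioi.mp ht']
    · exact h1
  obtain ⟨u, hu, hIoo⟩ := mem_nhdsGT_iff_exists_Ioo_subset.mp hneg
  have hE : ∀ᶠ t in 𝓝 a, DifferentiableAt ℝ f t ∧ f a ≤ f t := by
    filter_upwards [hev, hmin] with t h1 h2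
    exact ⟨h1.differentiableAt two_ne_zero, h2⟩
  obtain ⟨δ, hδ, hball⟩ := Metric.eventually_nhds_iff.mp hE
  set b := min (a + δ / 2) ((a + u) / 2) with hb
  have hab : a < b := by
    rw [hb]
    apply lt_min (by linarith)
    have := mem_Ioi.mp hu; linarith
  have hsub : Icc a b ⊆ Metric.ball a δ := by
    intro t ht
    rw [Real.ball_eq_Ioo]
    have hb2 : b ≤ a + δ / 2 := min_le_left _ _
    constructor
    · have := ht.1; linarith
    · have := ht.2; linarith
  have hanti : StrictAntiOn f (Icc a b) := by
    apply strictAntiOn_of_deriv_neg (convex_Icc a b)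
    · intro t ht
      exact ((hball (hsub ht)).1).continuousAt.continuousWithinAt
    · intro t ht
      rw [interior_Icc] at ht
      apply hIoo
      constructor
      · exact ht.1
      · have hb3 : b ≤ (a + u) / 2 := min_le_right _ _
        have := ht.2
        have := mem_Ioi.mp hu
        linarith
  have h1 : f b < f a := hanti (left_mem_Icc.mpr hab.le) (right_mem_Icc.mpr hab.le) hab
  have h2 : f a ≤ f b := (hball (hsub (right_mem_Icc.mpr hab.le))).2
  linarith

/-- At a local minimum of a `C²` function on `ℝⁿ`, the second derivative along any
direction is nonnegative. -/
lemma aux_fderiv2_nonneg {n : ℕ} {g : EuclideanSpace ℝ (Fin n) → ℝ}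
    {x₀ : EuclideanSpace ℝ (Fin n)} (hg : ContDiffAt ℝ 2 g x₀) (hmin : IsLocalMin g x₀)
    (v : EuclideanSpace ℝ (Fin n)) : 0 ≤ fderiv ℝ (fderiv ℝ g) x₀ v v := by
  set α : ℝ → EuclideanSpace ℝ (Fin n) := fun t => x₀ + t • v with hαdef
  have hα : ∀ t : ℝ, HasDerivAt α v t := by
    intro t
    have := ((hasDerivAt_id t).smul_const v).const_add x₀
    simpa [hαdef] using this
  have hα0 : α 0 = x₀ := by simp [hαdef]
  have hαc : Continuous α := by
    apply continuous_const.add (continuous_id.smul continuous_const)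
  have hαt : Tendsto α (𝓝 0) (𝓝 x₀) := hα0 ▸ hαc.tendsto 0
  have hαcd : ContDiffAt ℝ 2 α 0 :=
    (contDiff_const.add (contDiff_id.smul contDiff_const)).contDiffAt
  have hf2 : ContDiffAt ℝ 2 (g ∘ α) 0 := (hα0 ▸ hg).comp 0 hαcd
  have hfmin : IsLocalMin (g ∘ α) 0 := by
    have h := hαt.eventually hmin
    filter_upwards [h] with t ht
    simpa [hα0] using ht
  have h1 : 0 ≤ deriv (deriv (g ∘ α)) 0 := aux_deriv2_nonneg hf2 hfmin
  -- identify the second derivative of `g ∘ α`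
  have hgev : ∀ᶠ t in 𝓝 (0 : ℝ), ContDiffAt ℝ 2 g (α t) :=
    hαt.eventually (hg.eventually (by norm_num))
  have hd1 : (deriv (g ∘ α)) =ᶠ[𝓝 (0 : ℝ)] fun t => fderiv ℝ g (α t) v := by
    filter_upwards [hgev] with t ht
    exact (((ht.differentiableAt two_ne_zero).hasFDerivAt).comp_hasDerivAt t (hα t)).deriv
  have hD : DifferentiableAt ℝ (fderiv ℝ g) x₀ :=
    (hg.fderiv_right (m := 1) (by norm_num)).differentiableAt one_ne_zero
  have hd2 : HasDerivAt (fun t => fderiv ℝ g (α t) v) (fderiv ℝ (fderiv ℝ g) x₀ v v) 0 := by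
    have hcomp : HasDerivAt (fun t => fderiv ℝ g (α t)) (fderiv ℝ (fderiv ℝ g) x₀ v) 0 := by
      have := hD.hasFDerivAt.comp_hasDerivAt_of_eq 0 (hα 0) hα0.symm
      exact this
    have := hcomp.clm_apply (hasDerivAt_const (0 : ℝ) v)
    simpa using this
  have heq : deriv (deriv (g ∘ α)) 0 = fderiv ℝ (fderiv ℝ g) x₀ v v := by
    rw [hd1.deriv_eq, hd2.deriv]
  rw [heq] at h1
  exact h1

/-- At an interior local minimum of a `C²` function, the Laplacian is nonnegative. -/
lemma aux_laplacian_nonneg {n : ℕ} {g : EuclideanSpace ℝ (Fin n) → ℝ}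
    {x₀ : EuclideanSpace ℝ (Fin n)} (hg : ContDiffAt ℝ 2 g x₀) (hmin : IsLocalMin g x₀) :
    0 ≤ laplacian g x₀ := by
  apply Finset.sum_nonneg
  intro i _
  rw [iteratedFDeriv_two_apply]
  simpa using aux_fderiv2_nonneg hg hmin (EuclideanSpace.single i 1)

/-- Linearity of the Laplacian at points of twice differentiability. -/
lemma laplacian_comb {n : ℕ} (f g : EuclideanSpace ℝ (Fin n) → ℝ) (a b : ℝ)
    (x : EuclideanSpace ℝ (Fin n)) (hf : ContDiffAt ℝ 2 f x) (hg : ContDiffAt ℝ 2 g x) :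
    laplacian (fun y => a * f y + b * g y) x = a * laplacian f x + b * laplacian g x := by
  have key : fderiv ℝ (fderiv ℝ (fun y => a * f y + b * g y)) x
      = a • fderiv ℝ (fderiv ℝ f) x + b • fderiv ℝ (fderiv ℝ g) x := by
    have hev : (fderiv ℝ (fun y => a * f y + b * g y))
        =ᶠ[𝓝 x] fun y => a • fderiv ℝ f y + b • fderiv ℝ g y := by
      filter_upwards [hf.eventually (by norm_num), hg.eventually (by norm_num)] with y hfy hgy
      have hfd := hfy.differentiableAt two_ne_zero
      have hgd := hgy.differentiableAt two_ne_zero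
      rw [fderiv_fun_add (hfd.const_mul a) (hgd.const_mul b), fderiv_const_mul hfd a,
        fderiv_const_mul hgd b]
    rw [hev.fderiv_eq]
    have hdf : DifferentiableAt ℝ (fderiv ℝ f) x :=
      (hf.fderiv_right (m := 1) (by norm_num)).differentiableAt one_ne_zero
    have hdg : DifferentiableAt ℝ (fderiv ℝ g) x :=
      (hg.fderiv_right (m := 1) (by norm_num)).differentiableAt one_ne_zero
    rw [fderiv_fun_add (hdf.fun_const_smul a) (hdg.fun_const_smul b), fderiv_fun_const_smul hdf a,
      fderiv_fun_const_smul hdg b]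
  unfold laplacian
  rw [Finset.mul_sum, Finset.mul_sum, ← Finset.sum_add_distrib]
  apply Finset.sum_congr rfl
  intro i _
  rw [iteratedFDeriv_two_apply, iteratedFDeriv_two_apply, iteratedFDeriv_two_apply, key]
  simp

/-- Weak maximum principle for `-Δ + V` with `V ≥ 0`, using the landscape function `u₁`
(a strict supersolution vanishing on the boundary) as a perturbation. -/
lemma aux_max_principle {n : ℕ} (Ω : Set (EuclideanSpace ℝ (Fin n)))
    (hΩo : IsOpen Ω) (hΩb : Bornology.IsBounded Ω)
    (V u₁ : EuclideanSpace ℝ (Fin n) → ℝ)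
    (hVnonneg : ∀ x ∈ closure Ω, 0 ≤ V x)
    (hu₁c : ContinuousOn u₁ (closure Ω)) (hu₁2 : ∀ x ∈ Ω, ContDiffAt ℝ 2 u₁ x)
    (hu₁bd : ∀ x ∈ frontier Ω, u₁ x = 0)
    (hu₁eq : ∀ x ∈ Ω, -laplacian u₁ x + V x * u₁ x = 1)
    (w : EuclideanSpace ℝ (Fin n) → ℝ)
    (hwc : ContinuousOn w (closure Ω)) (hw2 : ∀ x ∈ Ω, ContDiffAt ℝ 2 w x)
    (hwbd : ∀ x ∈ frontier Ω, 0 ≤ w x)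
    (hweq : ∀ x ∈ Ω, 0 ≤ -laplacian w x + V x * w x) :
    ∀ x ∈ closure Ω, 0 ≤ w x := by
  intro x hxcl
  by_contra hneg
  push_neg at hneg
  set ε : ℝ := -(w x) / (2 * (|u₁ x| + 1)) with hε
  have hεpos : 0 < ε := div_pos (by linarith) (by positivity)
  set z : EuclideanSpace ℝ (Fin n) → ℝ := fun y => w y + ε * u₁ y with hzdef
  have hzc : ContinuousOn z (closure Ω) := hwc.add (continuousOn_const.mul hu₁c)
  have hcpt : IsCompact (closure Ω) := hΩb.isCompact_closure
  obtain ⟨x₀, hx₀cl, hx₀min⟩ := hcpt.exists_isMinOn ⟨x, hxcl⟩ hzc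
  have hz0 : 0 ≤ z x₀ := by
    by_cases hx₀ : x₀ ∈ Ω
    · -- interior minimum
      have hloc : IsLocalMin z x₀ :=
        hx₀min.isLocalMin (Filter.mem_of_superset (hΩo.mem_nhds hx₀) subset_closure)
      have hz2 : ContDiffAt ℝ 2 z x₀ :=
        (hw2 x₀ hx₀).add (contDiffAt_const.mul (hu₁2 x₀ hx₀))
      have hlap : 0 ≤ laplacian z x₀ := aux_laplacian_nonneg hz2 hloc
      have hcomb : laplacian z x₀ = 1 * laplacian w x₀ + ε * laplacian u₁ x₀ := by
        have h' := laplacian_comb w u₁ 1 ε x₀ (hw2 x₀ hx₀) (hu₁2 x₀ hx₀)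
        have hzz : z = fun y => 1 * w y + ε * u₁ y := by
          funext y; simp [hzdef]
        rw [hzz]
        exact h'
      have h1 := hweq x₀ hx₀
      have h2 := hu₁eq x₀ hx₀
      have hVz : 0 < V x₀ * z x₀ := by
        have hz' : V x₀ * z x₀ = V x₀ * w x₀ + ε * (V x₀ * u₁ x₀) := by
          simp only [hzdef]; ring
        nlinarith [hεpos, hlap, hcomb, h1, h2]
      have hV0 := hVnonneg x₀ (subset_closure hx₀)
      rcases mul_pos_iff.mp hVz with ⟨_, h⟩ | ⟨h, _⟩
      · exact h.le
      · linarith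
    · have hfr : x₀ ∈ frontier Ω := by
        rw [hΩo.frontier_eq]; exact ⟨hx₀cl, hx₀⟩
      have hw0 := hwbd x₀ hfr
      have hu0 := hu₁bd x₀ hfr
      simp only [hzdef, hu0, mul_zero, add_zero]
      exact hw0
  have hx' : 0 ≤ z x := le_trans hz0 (isMinOn_iff.mp hx₀min x hxcl)
  have h1 : u₁ x ≤ |u₁ x| := le_abs_self _
  have h2 : ε * (|u₁ x| + 1) = -(w x) / 2 := by
    rw [hε]
    have : |u₁ x| + 1 ≠ 0 := by positivity
    field_simp
  have h3 : ε * u₁ x ≤ ε * (|u₁ x| + 1) :=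
    mul_le_mul_of_nonneg_left (by linarith) hεpos.le
  simp only [hzdef] at hx'
  linarith

/-- **Iterated landscape inequality.** With `u k = (-Δ+V)^{-k} 1` (so `u 1 = u` is the
landscape function and `(-Δ+V) (u (j+1)) = u j`, all with Dirichlet boundary conditions),
every Dirichlet eigenfunction satisfies `|φ(x)| ≤ λ^k (u k)(x) ‖φ‖_{L^∞(Ω)}` for `k ≥ 1`. -/
theorem iterated_landscape_inequality {n : ℕ} (Ω : Set (EuclideanSpace ℝ (Fin n)))
    (hΩo : IsOpen Ω) (hΩb : Bornology.IsBounded Ω) (hΩne : Ω.Nonempty)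
    (V φ : EuclideanSpace ℝ (Fin n) → ℝ) (u : ℕ → EuclideanSpace ℝ (Fin n) → ℝ)
    (lam : ℝ) (hlam : 0 < lam)
    (hV : ContinuousOn V (closure Ω)) (hVnonneg : ∀ x ∈ closure Ω, 0 ≤ V x)
    (hφc : ContinuousOn φ (closure Ω)) (hφ2 : ∀ x ∈ Ω, ContDiffAt ℝ 2 φ x)
    (hφbd : ∀ x ∈ frontier Ω, φ x = 0)
    (hφeq : ∀ x ∈ Ω, -laplacian φ x + V x * φ x = lam * φ x)
    (huc : ∀ k, ContinuousOn (u k) (closure Ω))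
    (hu2 : ∀ k, ∀ x ∈ Ω, ContDiffAt ℝ 2 (u k) x)
    (hubd : ∀ k, ∀ x ∈ frontier Ω, u k x = 0)
    (hueq1 : ∀ x ∈ Ω, -laplacian (u 1) x + V x * u 1 x = 1)
    (hueq : ∀ j : ℕ, 1 ≤ j → ∀ x ∈ Ω,
      -laplacian (u (j + 1)) x + V x * u (j + 1) x = u j x) :
    ∀ k : ℕ, 1 ≤ k → ∀ x ∈ Ω,
      |φ x| ≤ lam ^ k * u k x * sSup ((fun y => |φ y|) '' closure Ω) := by
  set M : ℝ := sSup ((fun y => |φ y|) '' closure Ω) with hM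
  have hcpt : IsCompact (closure Ω) := hΩb.isCompact_closure
  have hbdd : BddAbove ((fun y => |φ y|) '' closure Ω) :=
    (hcpt.image_of_continuousOn hφc.abs).bddAbove
  have hMle : ∀ y ∈ closure Ω, |φ y| ≤ M := fun y hy =>
    le_csSup hbdd ⟨y, hy, rfl⟩
  have hM0 : 0 ≤ M := by
    obtain ⟨y, hy⟩ := hΩne
    exact le_trans (abs_nonneg _) (hMle y (subset_closure hy))
  -- the key step: for a sign `s = ±1` and level `k`, given the interior inequality
  -- `0 ≤ c * (RHS for u k) + s * lam * φ`, conclude positivity of `c * u k + s * φ`.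
  have key : ∀ (k : ℕ) (s : ℝ), s = 1 ∨ s = -1 →
      (∀ x ∈ Ω, 0 ≤ (lam ^ k * M) * (-laplacian (u k) x + V x * u k x)
        + s * (lam * φ x)) →
      ∀ x ∈ closure Ω, 0 ≤ (lam ^ k * M) * u k x + s * φ x := by
    intro k s hs hineq
    have := aux_max_principle Ω hΩo hΩb V (u 1) hVnonneg (huc 1) (hu2 1) (hubd 1) hueq1
      (fun y => (lam ^ k * M) * u k y + s * φ y)
      ((continuousOn_const.mul (huc k)).add (continuousOn_const.mul hφc))
      (fun x hx => (contDiffAt_const.mul (hu2 k x hx)).add (contDiffAt_const.mul (hφ2 x hx)))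
      (fun x hx => by
        show 0 ≤ lam ^ k * M * u k x + s * φ x
        rw [hubd k x hx, hφbd x hx]; simp)
      (fun x hx => by
        show 0 ≤ -laplacian (fun y => lam ^ k * M * u k y + s * φ y) x
          + V x * (lam ^ k * M * u k x + s * φ x)
        have hcomb := laplacian_comb (u k) φ (lam ^ k * M) s x (hu2 k x hx) (hφ2 x hx)
        have hφe := hφeq x hx
        have hexp : -laplacian (fun y => lam ^ k * M * u k y + s * φ y) x
            + V x * (lam ^ k * M * u k x + s * φ x)
            = (lam ^ k * M) * (-laplacian (u k) x + V x * u k x)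
              + s * (-laplacian φ x + V x * φ x) := by
          rw [hcomb]; ring
        rw [hexp, hφe]
        exact hineq x hx)
    exact this
  intro k hk
  induction k, hk using Nat.le_induction with
  | base =>
    intro x hx
    have hb : ∀ (s : ℝ), s = 1 ∨ s = -1 →
        ∀ y ∈ closure Ω, 0 ≤ (lam ^ 1 * M) * u 1 y + s * φ y := by
      intro s hs
      apply key 1 s hs
      intro y hy
      have h1 := hueq1 y hy
      rw [h1]
      have hMy := hMle y (subset_closure hy)
      obtain ⟨hl, hr⟩ := abs_le.mp hMy
      rcases hs with rfl | rfl
      · nlinarith [pow_pos hlam 1]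
      · nlinarith [pow_pos hlam 1]
    have hp := hb 1 (Or.inl rfl) x (subset_closure hx)
    have hm := hb (-1) (Or.inr rfl) x (subset_closure hx)
    rw [abs_le]
    constructor <;> nlinarith
  | succ j hj ih =>
    intro x hx
    have hb : ∀ (s : ℝ), s = 1 ∨ s = -1 →
        ∀ y ∈ closure Ω, 0 ≤ (lam ^ (j + 1) * M) * u (j + 1) y + s * φ y := by
      intro s hs
      apply key (j + 1) s hs
      intro y hy
      have h1 := hueq j hj y hy
      rw [h1]
      have hIH := ih y hy
      obtain ⟨hl, hr⟩ := abs_le.mp hIH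
      have hps : lam ^ (j + 1) = lam ^ j * lam := pow_succ lam j
      rcases hs with rfl | rfl
      · nlinarith [pow_pos hlam j, mul_le_mul_of_nonneg_left hl hlam.le]
      · nlinarith [pow_pos hlam j, mul_le_mul_of_nonneg_left hr hlam.le]
    have hp := hb 1 (Or.inl rfl) x (subset_closure hx)
    have hm := hb (-1) (Or.inr rfl) x (subset_closure hx)
    rw [abs_le]
    constructor <;> nlinarith
end

section
/- Let (-Δ + V)φ = λφ with Dirichlet boundary conditions, V ≥ 0, λ > 0, and let u be the landscape function. Let w solve (-Δ + V)w = min(λu, 1) with Dirichlet boundary conditions. Then |φ(x)| ≤ λ w(x) ‖φ‖_{L^∞(Ω)} for all x ∈ Ω. -/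
open MeasureTheory

open Filter Set Topology

section Aux

/-- **Second derivative test** (one direction): at a local minimum of a `C²` function, all
second directional derivatives are nonnegative. -/
lemma fderiv2_nonneg_of_isLocalMin {E : Type*} [NormedAddCommGroup E] [NormedSpace ℝ E]
    {f : E → ℝ} {x : E}
    (hf : ContDiffAt ℝ 2 f x) (hmin : IsLocalMin f x) (e : E) :
    0 ≤ fderiv ℝ (fderiv ℝ f) x e e := by
  by_contra hc
  push_neg at hc
  obtain ⟨s, hs_nhds, hs⟩ := hf.contDiffOn le_rfl (by simp)
  obtain ⟨t, hts, hto, hxt⟩ := mem_nhds_iff.mp hs_nhds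
  have hft : ContDiffOn ℝ 2 f t := hs.mono hts
  have hdiff : ∀ y ∈ t, DifferentiableAt ℝ f y := fun y hy =>
    (hft.differentiableOn (by norm_num)).differentiableAt (hto.mem_nhds hy)
  have hL : ∀ τ : ℝ, HasDerivAt (fun τ : ℝ => x + τ • e) e τ := by
    intro τ
    simpa using ((hasDerivAt_id τ).smul_const e).const_add x
  set g : ℝ → ℝ := fun τ => f (x + τ • e) with hgdef
  set φ1 : ℝ → ℝ := fun τ => fderiv ℝ f (x + τ • e) e with hφ1def
  have hcontL : Continuous fun τ : ℝ => x + τ • e := by continuity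
  have hNmem : ∀ᶠ τ : ℝ in 𝓝 0, x + τ • e ∈ t := by
    have : (fun τ : ℝ => x + τ • e) ⁻¹' t ∈ 𝓝 (0:ℝ) := by
      apply hcontL.continuousAt.preimage_mem_nhds
      simpa using hto.mem_nhds hxt
    exact this
  have hg' : ∀ τ : ℝ, x + τ • e ∈ t → HasDerivAt g (φ1 τ) τ := fun τ hτ =>
    ((hdiff _ hτ).hasFDerivAt).comp_hasDerivAt τ (hL τ)
  have hd2 : DifferentiableAt ℝ (fderiv ℝ f) x :=
    (hf.fderiv_right (m := 1) (le_refl 2)).differentiableAt one_ne_zero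
  have h0 : x + (0:ℝ) • e = x := by simp
  have hΦ : HasDerivAt (fun τ : ℝ => fderiv ℝ f (x + τ • e))
      (fderiv ℝ (fderiv ℝ f) x e) 0 := by
    have hfd : HasFDerivAt (fderiv ℝ f) (fderiv ℝ (fderiv ℝ f) x) (x + (0:ℝ) • e) := by
      rw [h0]; exact hd2.hasFDerivAt
    exact hfd.comp_hasDerivAt 0 (hL 0)
  have hφ1' : HasDerivAt φ1 (fderiv ℝ (fderiv ℝ f) x e e) 0 := by
    have hev := (ContinuousLinearMap.apply ℝ ℝ e).hasFDerivAt.comp_hasDerivAt 0 hΦ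
    exact hev
  have hφ10 : φ1 0 = 0 := by
    have hz := hmin.fderiv_eq_zero
    simp [hφ1def, h0, hz]
  have hslope := hasDerivAt_iff_tendsto_slope.mp hφ1'
  have hev1 : ∀ᶠ τ in 𝓝[≠] (0:ℝ), slope φ1 0 τ < 0 := hslope.eventually_lt_const hc
  have hgmin : IsLocalMin g 0 := by
    have hm2 : IsLocalMin (f ∘ fun τ : ℝ => x + τ • e) 0 :=
      IsLocalMin.comp_continuous (g := fun τ : ℝ => x + τ • e)
        (by simpa using hmin) hcontL.continuousAt
    exact hm2
  have hall : ∀ᶠ τ in 𝓝 (0:ℝ), (τ ≠ 0 → slope φ1 0 τ < 0) ∧ (x + τ • e ∈ t ∧ g 0 ≤ g τ) :=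
    (eventually_nhdsWithin_iff.mp hev1).and (hNmem.and hgmin)
  rw [Metric.eventually_nhds_iff] at hall
  obtain ⟨δ, hδ, hδp⟩ := hall
  have hmemδ : ∀ τ : ℝ, τ ∈ Icc 0 (δ/2) → dist τ 0 < δ := by
    intro τ hτ
    rw [Real.dist_eq, sub_zero, abs_of_nonneg hτ.1]
    linarith [hτ.2]
  have hanti : StrictAntiOn g (Icc 0 (δ/2)) := by
    apply strictAntiOn_of_deriv_neg (convex_Icc _ _)
    · intro τ hτ
      exact ((hg' τ (hδp (hmemδ τ hτ)).2.1).differentiableAt.continuousAt).continuousWithinAt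
    · intro τ hτ
      rw [interior_Icc] at hτ
      have hdst : dist τ 0 < δ := by
        rw [Real.dist_eq, sub_zero, abs_of_pos hτ.1]; linarith [hτ.2]
      obtain ⟨h1, h2, _⟩ := hδp hdst
      rw [(hg' τ h2).deriv]
      have hsl := h1 (ne_of_gt hτ.1)
      rw [slope_def_field, hφ10, sub_zero, sub_zero] at hsl
      have := (div_lt_iff₀ hτ.1).mp hsl
      linarith
  have hδ2 : (0:ℝ) < δ/2 := by linarith
  have hlt : g (δ/2) < g 0 :=
    hanti ⟨le_rfl, by linarith⟩ ⟨le_of_lt hδ2, le_rfl⟩ hδ2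
  have hge : g 0 ≤ g (δ/2) := (hδp (hmemδ _ ⟨le_of_lt hδ2, le_rfl⟩)).2.2
  linarith

variable {n : ℕ}

lemma laplacian_eq_sum (f : EuclideanSpace ℝ (Fin n) → ℝ) (x : EuclideanSpace ℝ (Fin n)) :
    laplacian f x = ∑ i : Fin n,
      fderiv ℝ (fderiv ℝ f) x (EuclideanSpace.single i 1) (EuclideanSpace.single i 1) := by
  unfold laplacian
  refine Finset.sum_congr rfl fun i _ => ?_
  rw [iteratedFDeriv_two_apply]
  simp

lemma laplacian_nonneg_of_isLocalMin {f : EuclideanSpace ℝ (Fin n) → ℝ}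
    {x : EuclideanSpace ℝ (Fin n)} (hf : ContDiffAt ℝ 2 f x) (hmin : IsLocalMin f x) :
    0 ≤ laplacian f x := by
  rw [laplacian_eq_sum]
  exact Finset.sum_nonneg fun i _ => fderiv2_nonneg_of_isLocalMin hf hmin _

lemma laplacian_combo {u v : EuclideanSpace ℝ (Fin n) → ℝ} {x : EuclideanSpace ℝ (Fin n)}
    (hu : ContDiffAt ℝ 2 u x) (hv : ContDiffAt ℝ 2 v x) (a b : ℝ) :
    laplacian (fun y => a * u y + b * v y) x = a * laplacian u x + b * laplacian v x := by
  obtain ⟨s, hs_nhds, hsu⟩ := hu.contDiffOn le_rfl (by simp)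
  obtain ⟨s', hs'_nhds, hsv⟩ := hv.contDiffOn le_rfl (by simp)
  obtain ⟨t, hts, hto, hxt⟩ := mem_nhds_iff.mp (inter_mem hs_nhds hs'_nhds)
  have hut : ∀ y ∈ t, DifferentiableAt ℝ u y := fun y hy =>
    ((hsu.mono (fun z hz => (hts hz).1)).differentiableOn (by norm_num)).differentiableAt
      (hto.mem_nhds hy)
  have hvt : ∀ y ∈ t, DifferentiableAt ℝ v y := fun y hy =>
    ((hsv.mono (fun z hz => (hts hz).2)).differentiableOn (by norm_num)).differentiableAt
      (hto.mem_nhds hy)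
  have heq : (fun y => fderiv ℝ (fun z => a * u z + b * v z) y)
      =ᶠ[𝓝 x] (fun y => a • fderiv ℝ u y + b • fderiv ℝ v y) := by
    filter_upwards [hto.mem_nhds hxt] with y hy
    rw [fderiv_fun_add ((hut y hy).const_mul a) ((hvt y hy).const_mul b),
      fderiv_const_mul (hut y hy), fderiv_const_mul (hvt y hy)]
  have hdu : DifferentiableAt ℝ (fderiv ℝ u) x :=
    (hu.fderiv_right (m := 1) (le_refl 2)).differentiableAt one_ne_zero
  have hdv : DifferentiableAt ℝ (fderiv ℝ v) x :=
    (hv.fderiv_right (m := 1) (le_refl 2)).differentiableAt one_ne_zero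
  have h2 : fderiv ℝ (fderiv ℝ (fun y => a * u y + b * v y)) x
      = a • fderiv ℝ (fderiv ℝ u) x + b • fderiv ℝ (fderiv ℝ v) x := by
    rw [heq.fderiv_eq, fderiv_fun_add (f := fun y => a • fderiv ℝ u y) (g := fun y => b • fderiv ℝ v y)
      (hdu.const_smul a) (hdv.const_smul b),
      fderiv_fun_const_smul hdu, fderiv_fun_const_smul hdv]
  rw [laplacian_eq_sum, laplacian_eq_sum, laplacian_eq_sum, Finset.mul_sum, Finset.mul_sum,
    ← Finset.sum_add_distrib]
  refine Finset.sum_congr rfl fun i _ => ?_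
  rw [h2]
  simp [ContinuousLinearMap.add_apply, ContinuousLinearMap.smul_apply]

/-- **Weak maximum principle** for `-Δ + V`, using the landscape function `u` as a barrier. -/
lemma maximum_principle {Ω : Set (EuclideanSpace ℝ (Fin n))} (hΩo : IsOpen Ω)
    (hΩb : Bornology.IsBounded Ω) {V u h : EuclideanSpace ℝ (Fin n) → ℝ}
    (hVnonneg : ∀ x ∈ closure Ω, 0 ≤ V x)
    (huc : ContinuousOn u (closure Ω)) (hu2 : ∀ x ∈ Ω, ContDiffAt ℝ 2 u x)
    (hubd : ∀ x ∈ frontier Ω, u x = 0)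
    (hueq : ∀ x ∈ Ω, -laplacian u x + V x * u x = 1)
    (hhc : ContinuousOn h (closure Ω)) (hh2 : ∀ x ∈ Ω, ContDiffAt ℝ 2 h x)
    (hhbd : ∀ x ∈ frontier Ω, h x = 0)
    (hheq : ∀ x ∈ Ω, 0 ≤ -laplacian h x + V x * h x) :
    ∀ x ∈ closure Ω, 0 ≤ h x := by
  by_contra hcon
  push_neg at hcon
  obtain ⟨x₀, hx₀K, hx₀⟩ := hcon
  have hK : IsCompact (closure Ω) := hΩb.isCompact_closure
  obtain ⟨C, hC⟩ := hK.exists_bound_of_continuousOn huc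
  set C' : ℝ := max C 1 with hC'def
  have hC'pos : (0:ℝ) < C' := lt_of_lt_of_le one_pos (le_max_right _ _)
  have hCu : ∀ x ∈ closure Ω, u x ≤ C' := fun x hx =>
    le_trans (le_trans (le_abs_self _) (hC x hx)) (le_max_left _ _)
  set ε : ℝ := (-h x₀) / (2 * C') with hεdef
  have hε : 0 < ε := div_pos (by linarith) (by linarith)
  set g : EuclideanSpace ℝ (Fin n) → ℝ := fun y => h y + ε * u y with hgdef
  have hgc : ContinuousOn g (closure Ω) := hhc.add (continuousOn_const.mul huc)
  obtain ⟨y, hyK, hymin⟩ := hK.exists_isMinOn ⟨x₀, hx₀K⟩ hgc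
  have hgx₀ : g x₀ < 0 := by
    have h1 : ε * u x₀ ≤ ε * C' := mul_le_mul_of_nonneg_left (hCu x₀ hx₀K) hε.le
    have h2 : ε * C' = -h x₀ / 2 := by
      rw [hεdef]; field_simp
    simp only [hgdef]
    linarith
  have hgy : g y < 0 := lt_of_le_of_lt (hymin hx₀K) hgx₀
  have hyΩ : y ∈ Ω := by
    rcases (closure_eq_self_union_frontier Ω ▸ hyK) with hy | hy
    · exact hy
    · exfalso
      have : g y = 0 := by simp [hgdef, hhbd y hy, hubd y hy]
      linarith
  have hlocmin : IsLocalMin g y := hymin.isLocalMin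
    (mem_nhds_iff.mpr ⟨Ω, subset_closure, hΩo, hyΩ⟩)
  have hg2 : ContDiffAt ℝ 2 g y := (hh2 y hyΩ).add (contDiffAt_const.mul (hu2 y hyΩ))
  have hlap : 0 ≤ laplacian g y := laplacian_nonneg_of_isLocalMin hg2 hlocmin
  have hrw : g = fun z => 1 * h z + ε * u z := by funext z; simp [hgdef]
  have hcombo : laplacian g y = 1 * laplacian h y + ε * laplacian u y := by
    rw [hrw]; exact laplacian_combo (hh2 y hyΩ) (hu2 y hyΩ) 1 ε
  have hA := hheq y hyΩ
  have hB := hueq y hyΩ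
  have hVy : 0 ≤ V y := hVnonneg y (subset_closure hyΩ)
  have hVg : V y * (h y + ε * u y) ≤ 0 :=
    mul_nonpos_iff.mpr (Or.inl ⟨hVy, hgy.le⟩)
  have hexp : V y * (h y + ε * u y) = V y * h y + ε * (V y * u y) := by ring
  have hVu : V y * u y = 1 + laplacian u y := by linarith
  have hB2 : ε * (V y * u y) = ε + ε * laplacian u y := by rw [hVu]; ring
  have hlap0 : 0 ≤ laplacian h y + ε * laplacian u y := by
    rw [hcombo] at hlap; linarith
  linarith

/-- Comparison via the maximum principle: `|g| ≤ f` when `(-Δ+V)f = F`, `(-Δ+V)g = G` and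
`|G| ≤ F` on `Ω`, both vanishing on the boundary. -/
lemma abs_bound {Ω : Set (EuclideanSpace ℝ (Fin n))} (hΩo : IsOpen Ω)
    (hΩb : Bornology.IsBounded Ω) {V u f g : EuclideanSpace ℝ (Fin n) → ℝ}
    {F G : EuclideanSpace ℝ (Fin n) → ℝ}
    (hVnonneg : ∀ x ∈ closure Ω, 0 ≤ V x)
    (huc : ContinuousOn u (closure Ω)) (hu2 : ∀ x ∈ Ω, ContDiffAt ℝ 2 u x)
    (hubd : ∀ x ∈ frontier Ω, u x = 0)
    (hueq : ∀ x ∈ Ω, -laplacian u x + V x * u x = 1)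
    (hfc : ContinuousOn f (closure Ω)) (hf2 : ∀ x ∈ Ω, ContDiffAt ℝ 2 f x)
    (hfbd : ∀ x ∈ frontier Ω, f x = 0)
    (hfeq : ∀ x ∈ Ω, -laplacian f x + V x * f x = F x)
    (hgc : ContinuousOn g (closure Ω)) (hg2 : ∀ x ∈ Ω, ContDiffAt ℝ 2 g x)
    (hgbd : ∀ x ∈ frontier Ω, g x = 0)
    (hgeq : ∀ x ∈ Ω, -laplacian g x + V x * g x = G x)
    (hcomp : ∀ x ∈ Ω, |G x| ≤ F x) :
    ∀ x ∈ closure Ω, |g x| ≤ f x := by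
  have key : ∀ b : ℝ, b = 1 ∨ b = -1 → ∀ x ∈ closure Ω, 0 ≤ f x + b * g x := by
    intro b hb
    apply maximum_principle hΩo hΩb hVnonneg huc hu2 hubd hueq
      (hfc.add (continuousOn_const.mul hgc))
      (fun x hx => (hf2 x hx).add (contDiffAt_const.mul (hg2 x hx)))
      (fun x hx => by simp [hfbd x hx, hgbd x hx])
    intro x hx
    have hrw : (fun y => f y + b * g y) = fun y => 1 * f y + b * g y := by
      funext z; ring
    have hcombo : laplacian (fun y => f y + b * g y) x
        = 1 * laplacian f x + b * laplacian g x := by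
      rw [hrw]; exact laplacian_combo (hf2 x hx) (hg2 x hx) 1 b
    have hFx := hfeq x hx
    have hGx := hgeq x hx
    have hCx := hcomp x hx
    have habs1 := le_abs_self (G x)
    have habs2 := neg_abs_le (G x)
    have hbG : b * (-laplacian g x + V x * g x) = b * G x := by rw [hGx]
    show 0 ≤ -laplacian (fun y => f y + b * g y) x + V x * (f x + b * g x)
    rcases hb with hb | hb <;> subst hb <;>
      · simp only [hcombo]
        nlinarith [hbG]
  intro x hx
  have h1 := key 1 (Or.inl rfl) x hx
  have h2 := key (-1) (Or.inr rfl) x hx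
  rw [abs_le]
  constructor <;> nlinarith

end Aux

/-- **Bootstrapped landscape inequality with cutoff.** If `u` is the landscape function
`(-Δ+V)u = 1` and `w` solves `(-Δ+V)w = min(λ u, 1)` (Dirichlet boundary conditions), then
`|φ(x)| ≤ λ w(x) ‖φ‖_{L^∞(Ω)}` for all `x ∈ Ω`. -/
theorem landscape_cutoff_inequality {n : ℕ} (Ω : Set (EuclideanSpace ℝ (Fin n)))
    (hΩo : IsOpen Ω) (hΩb : Bornology.IsBounded Ω) (hΩne : Ω.Nonempty)
    (V φ u w : EuclideanSpace ℝ (Fin n) → ℝ) (lam : ℝ) (hlam : 0 < lam)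
    (hV : ContinuousOn V (closure Ω)) (hVnonneg : ∀ x ∈ closure Ω, 0 ≤ V x)
    (hφc : ContinuousOn φ (closure Ω)) (hφ2 : ∀ x ∈ Ω, ContDiffAt ℝ 2 φ x)
    (hφbd : ∀ x ∈ frontier Ω, φ x = 0)
    (hφeq : ∀ x ∈ Ω, -laplacian φ x + V x * φ x = lam * φ x)
    (huc : ContinuousOn u (closure Ω)) (hu2 : ∀ x ∈ Ω, ContDiffAt ℝ 2 u x)
    (hubd : ∀ x ∈ frontier Ω, u x = 0)
    (hueq : ∀ x ∈ Ω, -laplacian u x + V x * u x = 1)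
    (hwc : ContinuousOn w (closure Ω)) (hw2 : ∀ x ∈ Ω, ContDiffAt ℝ 2 w x)
    (hwbd : ∀ x ∈ frontier Ω, w x = 0)
    (hweq : ∀ x ∈ Ω, -laplacian w x + V x * w x = min (lam * u x) 1) :
    ∀ x ∈ Ω, |φ x| ≤ lam * w x * sSup ((fun y => |φ y|) '' closure Ω) := by
  have hK : IsCompact (closure Ω) := hΩb.isCompact_closure
  set M : ℝ := sSup ((fun y => |φ y|) '' closure Ω) with hMdef
  have hbdd : BddAbove ((fun y => |φ y|) '' closure Ω) :=
    (hK.image_of_continuousOn hφc.abs).bddAbove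
  have hMb : ∀ x ∈ closure Ω, |φ x| ≤ M := fun x hx => le_csSup hbdd ⟨x, hx, rfl⟩
  obtain ⟨x₀, hx₀⟩ := hΩne
  have hM0 : 0 ≤ M := le_trans (abs_nonneg _) (hMb x₀ (subset_closure hx₀))
  -- Step 1: |φ| ≤ lam * M * u on closure Ω
  have step1 : ∀ x ∈ closure Ω, |φ x| ≤ lam * M * u x := by
    apply abs_bound hΩo hΩb hVnonneg huc hu2 hubd hueq
      (continuousOn_const.mul huc)
      (fun x hx => contDiffAt_const.mul (hu2 x hx))
      (fun x hx => by simp [hubd x hx])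
      (F := fun _ => lam * M)
      (fun x hx => ?_) hφc hφ2 hφbd hφeq (fun x hx => ?_)
    · have hrw : (fun y => lam * M * u y) = fun y => (lam * M) * u y + 0 * u y := by
        funext z; ring
      have hcombo : laplacian (fun y => lam * M * u y) x
          = (lam * M) * laplacian u x + 0 * laplacian u x := by
        rw [hrw]; exact laplacian_combo (hu2 x hx) (hu2 x hx) (lam * M) 0
      have := hueq x hx
      show -laplacian (fun y => lam * M * u y) x + V x * (lam * M * u x) = lam * M
      rw [hcombo]
      show _ = lam * M
      linear_combination (lam * M) * this
    · rw [abs_mul, abs_of_pos hlam]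
      exact mul_le_mul_of_nonneg_left (hMb x (subset_closure hx)) hlam.le
  -- Step 2: |φ| ≤ min (lam * u) 1 * M on Ω
  have step2 : ∀ x ∈ Ω, |φ x| ≤ min (lam * u x) 1 * M := by
    intro x hx
    rcases le_total (lam * u x) 1 with h | h
    · rw [min_eq_left h]
      calc |φ x| ≤ lam * M * u x := step1 x (subset_closure hx)
        _ = lam * u x * M := by ring
    · rw [min_eq_right h, one_mul]
      exact hMb x (subset_closure hx)
  -- Step 3: |φ| ≤ lam * M * w on closure Ω
  have step3 : ∀ x ∈ closure Ω, |φ x| ≤ lam * M * w x := by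
    apply abs_bound hΩo hΩb hVnonneg huc hu2 hubd hueq
      (continuousOn_const.mul hwc)
      (fun x hx => contDiffAt_const.mul (hw2 x hx))
      (fun x hx => by simp [hwbd x hx])
      (F := fun x => lam * M * min (lam * u x) 1)
      (fun x hx => ?_) hφc hφ2 hφbd hφeq (fun x hx => ?_)
    · have hrw : (fun y => lam * M * w y) = fun y => (lam * M) * w y + 0 * w y := by
        funext z; ring
      have hcombo : laplacian (fun y => lam * M * w y) x
          = (lam * M) * laplacian w x + 0 * laplacian w x := by
        rw [hrw]; exact laplacian_combo (hw2 x hx) (hw2 x hx) (lam * M) 0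
      have := hweq x hx
      show -laplacian (fun y => lam * M * w y) x + V x * (lam * M * w x) = lam * M * min (lam * u x) 1
      rw [hcombo]
      show _ = lam * M * min (lam * u x) 1
      linear_combination (lam * M) * this
    · rw [abs_mul, abs_of_pos hlam]
      calc lam * |φ x| ≤ lam * (min (lam * u x) 1 * M) :=
            mul_le_mul_of_nonneg_left (step2 x hx) hlam.le
        _ = lam * M * min (lam * u x) 1 := by ring
  intro x hx
  have := step3 x (subset_closure hx)
  calc |φ x| ≤ lam * M * w x := this
    _ = lam * w x * M := by ring
end

section
/- Suppose h : Ω → ℝ is a landscape function for the eigenvalue λ, i.e., every eigenfunction φ with (-Δ + V)φ = λφ (Dirichlet boundary conditions) satisfies |φ(x)| ≤ h(x)‖φ‖_{L^∞}. Then the function h₁(x) = inf_{t ≥ 0} e^{λt} (e^{t(Δ - V)} h)(x) is also a landscape function: |φ(x)| ≤ h₁(x)‖φ‖_{L^∞} for all x ∈ Ω. Moreover h₁ ≤ h pointwise. -/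
/-- **Landscape bootstrapping.** Let `T t = e^{t(Δ - V)}` be the (positivity-preserving,
homogeneous) Dirichlet Schrödinger semigroup, so that the eigenfunction `φ` with
`(-Δ+V)φ = λφ` satisfies `T t φ = e^{-λ t} φ`. If `h` is a landscape function, i.e.
`|φ(x)| ≤ h(x) ‖φ‖_{L^∞}`, then so is
`h₁(x) = inf_{t ≥ 0} e^{λ t} (e^{t(Δ-V)} h)(x)`, and moreover `h₁ ≤ h` pointwise. -/
theorem landscape_bootstrapping {α : Type*}
    (T : ℝ → (α → ℝ) → (α → ℝ)) (φ h : α → ℝ) (lam M : ℝ) (hM : 0 < M)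
    (hT0 : ∀ g, T 0 g = g)
    (hTpos : ∀ t : ℝ, 0 ≤ t → ∀ f g : α → ℝ, (∀ x, f x ≤ g x) → ∀ x, T t f x ≤ T t g x)
    (hThom : ∀ t : ℝ, 0 ≤ t → ∀ (c : ℝ) (f : α → ℝ),
      T t (fun x => c * f x) = fun x => c * T t f x)
    (hTeigen : ∀ t : ℝ, 0 ≤ t → ∀ x, T t φ x = Real.exp (-(lam * t)) * φ x)
    (hland : ∀ x, |φ x| ≤ h x * M) :
    (∀ x, |φ x| ≤ (⨅ t : {t : ℝ // 0 ≤ t}, Real.exp (lam * t) * T t h x) * M) ∧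
      (∀ x, (⨅ t : {t : ℝ // 0 ≤ t}, Real.exp (lam * t) * T t h x) ≤ h x) := by
  -- pointwise bound for each t
  have key : ∀ t : ℝ, 0 ≤ t → ∀ x, |φ x| ≤ Real.exp (lam * t) * T t h x * M := by
    intro t ht x
    have hMh : T t (fun x => M * h x) = fun x => M * T t h x := hThom t ht M h
    have h1 : T t φ x ≤ M * T t h x := by
      have := hTpos t ht φ (fun x => M * h x)
        (fun x => by nlinarith [le_abs_self (φ x), hland x]) x
      rwa [hMh] at this
    have h2 : T t (fun x => (-1 : ℝ) * φ x) x ≤ M * T t h x := by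
      have := hTpos t ht (fun x => (-1 : ℝ) * φ x) (fun x => M * h x)
        (fun x => by nlinarith [(abs_le.mp (hland x)).1]) x
      rwa [hMh] at this
    rw [hThom t ht (-1) φ] at h2
    simp only [] at h2
    rw [hTeigen t ht x] at h1 h2
    have habs : Real.exp (-(lam * t)) * |φ x| ≤ M * T t h x := by
      rcases abs_cases (φ x) with ⟨he, _⟩ | ⟨he, _⟩
      · rw [he]; exact h1
      · rw [he]; nlinarith [h2]
    have hexp : (0:ℝ) < Real.exp (-(lam * t)) := Real.exp_pos _
    have := mul_le_mul_of_nonneg_left habs (le_of_lt (Real.exp_pos (lam * t)))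
    rw [← mul_assoc, ← Real.exp_add] at this
    simp only [add_neg_cancel, Real.exp_zero, one_mul] at this
    nlinarith
  refine ⟨fun x => ?_, fun x => ?_⟩
  · have hlb : |φ x| / M ≤ ⨅ t : {t : ℝ // 0 ≤ t}, Real.exp (lam * t) * T t h x := by
      refine le_ciInf fun t => ?_
      exact (div_le_iff₀ hM).mpr (key t.1 t.2 x)
    calc |φ x| = |φ x| / M * M := by field_simp
    _ ≤ _ := mul_le_mul_of_nonneg_right hlb (le_of_lt hM)
  · have hbdd : BddBelow (Set.range fun t : {t : ℝ // 0 ≤ t} => Real.exp (lam * t) * T t h x) := by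
      refine ⟨|φ x| / M, ?_⟩
      rintro y ⟨t, rfl⟩
      exact (div_le_iff₀ hM).mpr (key t.1 t.2 x)
    have := ciInf_le hbdd (⟨0, le_refl 0⟩ : {t : ℝ // 0 ≤ t})
    simpa [hT0, Real.exp_zero] using this
end
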